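/- arXiv:1606.03305 — 3 statements merged into one kernel-verified Lean document; each statement's English description precedes it below -/
import Mathlib

section
/- A symmetric 2×2 real matrix B can be written as B = (b aᵀ + a bᵀ)/2 for some vectors a, b ∈ ℝ² if and only if det(B) ≤ 0. -/
/-!
The symmetrization of `b aᵀ` has determinant `-(a₀ b₁ - a₁ b₀)² / 4 ≤ 0`. Conversely, `B` is the
matrix of the quadratic form `xᵀ B x`, whose discriminant is `-det B ≥ 0`; so the form splits as
`(a ⬝ᵥ x) (b ⬝ᵥ x)`, and the symmetrization of `b aᵀ` has the same quadratic form, hence equals `B`.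
-/

open Matrix

section

variable {K : Type*} [Field K] [NeZero (2 : K)]

theorem symmetrized_vecMulVec_fin_two (a b : Fin 2 → K) :
    (1/2 : K) • (vecMulVec b a + vecMulVec a b) =
      !![a 0 * b 0, (a 0 * b 1 + a 1 * b 0) / 2; (a 0 * b 1 + a 1 * b 0) / 2, a 1 * b 1] := by
  ext i j
  fin_cases i <;> fin_cases j <;> simp [vecMulVec_apply] <;> field_simp <;> ring

theorem det_symmetrized_vecMulVec_fin_two (a b : Fin 2 → K) :
    ((1/2 : K) • (vecMulVec b a + vecMulVec a b)).det = -((a 0 * b 1 - a 1 * b 0) / 2) ^ 2 := by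
  rw [symmetrized_vecMulVec_fin_two, det_fin_two_of]
  field_simp
  ring

end

theorem Matrix.IsSymm.eq_of_fin_two {α : Type*} {B : Matrix (Fin 2) (Fin 2) α} (hB : B.IsSymm) :
    B = !![B 0 0, B 0 1; B 0 1, B 1 1] := by
  have hB_eta := eta_fin_two B
  rwa [hB.apply 0 1] at hB_eta

/-- A binary quadratic form `p x² + 2 q x y + r y²` with nonnegative discriminant splits into
two real linear factors `(a₀ x + a₁ y) (b₀ x + b₁ y)`. -/
theorem exists_linear_factors_of_mul_le_sq {p q r : ℝ} (h : p * r ≤ q ^ 2) :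
    ∃ a b : Fin 2 → ℝ,
      a 0 * b 0 = p ∧ (a 0 * b 1 + a 1 * b 0) / 2 = q ∧ a 1 * b 1 = r := by
  by_cases hp : p = 0
  · exact ⟨![0, 1], ![2 * q, r], by simp [hp], by simp, by simp⟩
  · set s := √(q ^ 2 - p * r)
    have hs : s ^ 2 = q ^ 2 - p * r := Real.sq_sqrt (by linarith)
    refine ⟨![1, (q - s) / p], ![p, q + s], by simp, ?_, ?_⟩
    · simp only [cons_val_zero, cons_val_one, cons_val_fin_one, one_mul]
      field_simp
      ring
    · simp only [cons_val_one, cons_val_fin_one]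
      field_simp
      linear_combination -hs

/-- A symmetric 2×2 real matrix `B` is a symmetrized rank-one matrix,
i.e. `B = (b aᵀ + a bᵀ)/2` for some `a b : ℝ²`, iff `det B ≤ 0`. -/
theorem symmetrized_rank_one_iff_det_nonpos
    (B : Matrix (Fin 2) (Fin 2) ℝ) (hB : B.IsSymm) :
    (∃ a b : Fin 2 → ℝ,
        B = (1/2 : ℝ) • (vecMulVec b a + vecMulVec a b)) ↔ B.det ≤ 0 := by
  constructor
  · rintro ⟨a, b, rfl⟩
    rw [det_symmetrized_vecMulVec_fin_two]
    exact neg_nonpos.2 (sq_nonneg _)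
  · intro hdet
    have hdisc : B 0 0 * B 1 1 ≤ B 0 1 ^ 2 := by
      rw [hB.eq_of_fin_two, det_fin_two_of] at hdet
      linarith
    obtain ⟨a, b, h00, h01, h11⟩ := exists_linear_factors_of_mul_le_sq hdisc
    refine ⟨a, b, ?_⟩
    rw [symmetrized_vecMulVec_fin_two, h00, h01, h11]
    exact hB.eq_of_fin_two
end

section
/- A symmetric 3×3 real matrix B is a symmetrized rank-one matrix, i.e. B = (b aᵀ + a bᵀ)/2 for some vectors a, b ∈ ℝ³, if and only if either B has two eigenvalues of opposite signs and one zero eigenvalue, or B has at least two zero eigenvalues (counting multiplicity). -/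
/-!
`S = (b aᵀ + a bᵀ)/2` has rank at most two, so `det S = 0` and one eigenvalue vanishes. Moreover
`tr S = a ⬝ b` and `tr S² = ((a ⬝ b)² + |a|²|b|²)/2`, so Cauchy–Schwarz gives `(tr S)² ≤ tr S²`,
i.e. the product of the two remaining eigenvalues is `≤ 0`.

Conversely, in an orthonormal eigenbasis such a `B` is `x xᵀ - y yᵀ` with `x = √λ₊ u₊` and
`y = √(-λ₋) u₋`, and this is the symmetrization of `(x - y)(x + y)ᵀ`.
-/

open Matrix Unitary

namespace Matrix

variable {n R : Type*}

def symmetrizedVecMulVec [Field R] (a b : n → R) : Matrix n n R :=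
  (1 / 2 : R) • (vecMulVec b a + vecMulVec a b)

section Field

variable [Field R] [NeZero (2 : R)]

theorem trace_symmetrizedVecMulVec [Fintype n] (a b : n → R) :
    (symmetrizedVecMulVec a b).trace = a ⬝ᵥ b := by
  simp only [symmetrizedVecMulVec, trace_smul, trace_add, trace_vecMulVec, dotProduct_comm b a,
    smul_eq_mul]
  field_simp
  ring

theorem trace_symmetrizedVecMulVec_mul_self [Fintype n] (a b : n → R) :
    (symmetrizedVecMulVec a b * symmetrizedVecMulVec a b).trace =
      ((a ⬝ᵥ b) ^ 2 + (a ⬝ᵥ a) * (b ⬝ᵥ b)) / 2 := by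
  simp only [symmetrizedVecMulVec, smul_mul_smul_comm, mul_add, add_mul, vecMulVec_mul_vecMulVec,
    trace_smul, trace_add, trace_vecMulVec, dotProduct_smul, smul_eq_mul, dotProduct_comm b a]
  field_simp
  ring

theorem symmetrizedVecMulVec_add_sub (x y : n → R) :
    symmetrizedVecMulVec (x + y) (x - y) = vecMulVec x x - vecMulVec y y := by
  ext p q
  simp only [symmetrizedVecMulVec, smul_apply, add_apply, sub_apply, vecMulVec_apply,
    Pi.add_apply, Pi.sub_apply, smul_eq_mul]
  field_simp
  ring

end Field

theorem det_symmetrizedVecMulVec_fin_three [Field R] (a b : Fin 3 → R) :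
    (symmetrizedVecMulVec a b).det = 0 := by
  simp only [det_fin_three, symmetrizedVecMulVec, smul_apply, add_apply, vecMulVec_apply,
    smul_eq_mul]
  ring

namespace IsHermitian

variable [Fintype n] [DecidableEq n]

theorem trace_mul_self {𝕜 : Type*} [RCLike 𝕜] {A : Matrix n n 𝕜} (hA : A.IsHermitian) :
    (A * A).trace = ∑ i, (hA.eigenvalues i : 𝕜) ^ 2 := by
  have hU := Unitary.coe_star_mul_self hA.eigenvectorUnitary
  conv_lhs => rw [hA.spectral_theorem, ← map_mul, conjStarAlgAut_apply, trace_mul_cycle, hU,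
    one_mul, diagonal_mul_diagonal, trace_diagonal]
  simp [sq]

theorem eq_sum_smul_vecMulVec {𝕜 : Type*} [RCLike 𝕜] {A : Matrix n n 𝕜} (hA : A.IsHermitian) :
    A = ∑ i, (hA.eigenvalues i : 𝕜) •
      vecMulVec (hA.eigenvectorBasis i) (star (hA.eigenvectorBasis i : n → 𝕜)) := by
  conv_lhs => rw [hA.spectral_theorem]
  ext p q
  rw [conjStarAlgAut_apply, mul_apply]
  simp only [mul_diagonal, sum_apply, smul_apply, vecMulVec_apply, star_apply, Pi.star_apply,
    Function.comp_apply, eigenvectorUnitary_apply, smul_eq_mul]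
  exact Finset.sum_congr rfl fun m _ => by ring

variable {A : Matrix n n ℝ} (hA : A.IsHermitian)
include hA

theorem sq_sum_eigenvalues_le_of_eq_symmetrizedVecMulVec {a b : n → ℝ}
    (h : A = symmetrizedVecMulVec a b) :
    (∑ i, hA.eigenvalues i) ^ 2 ≤ ∑ i, hA.eigenvalues i ^ 2 := by
  have htr : A.trace = ∑ i, hA.eigenvalues i := by simpa using hA.trace_eq_sum_eigenvalues
  have htr2 : (A * A).trace = ∑ i, hA.eigenvalues i ^ 2 := by simpa using hA.trace_mul_self
  rw [← htr, ← htr2, h, trace_symmetrizedVecMulVec, trace_symmetrizedVecMulVec_mul_self]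
  have hCS : (a ⬝ᵥ b) ^ 2 ≤ (a ⬝ᵥ a) * (b ⬝ᵥ b) := by
    simpa only [dotProduct, ← sq] using Finset.sum_mul_sq_le_sq_mul_sq Finset.univ a b
  linarith

theorem exists_eq_symmetrizedVecMulVec_of_eigenvalues {i k : n} (hik : i ≠ k)
    (hi : hA.eigenvalues i ≤ 0) (hk : 0 ≤ hA.eigenvalues k)
    (h : ∀ m, m ≠ i → m ≠ k → hA.eigenvalues m = 0) :
    ∃ a b : n → ℝ, A = symmetrizedVecMulVec a b := by
  set u : n → n → ℝ := fun m => hA.eigenvectorBasis m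
  have hdecomp : A = hA.eigenvalues i • vecMulVec (u i) (u i) +
      hA.eigenvalues k • vecMulVec (u k) (u k) := by
    conv_lhs => rw [hA.eq_sum_smul_vecMulVec]
    simp only [RCLike.ofReal_real_eq_id, id, star_trivial]
    exact Finset.sum_eq_add i k hik (fun m _ hm => by simp [h m hm.1 hm.2]) (by simp) (by simp)
  set x := √(hA.eigenvalues k) • u k
  set y := √(-hA.eigenvalues i) • u i
  refine ⟨x + y, x - y, ?_⟩
  rw [symmetrizedVecMulVec_add_sub, hdecomp]
  simp only [x, y, smul_vecMulVec, vecMulVec_smul, smul_smul, Real.mul_self_sqrt hk,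
    Real.mul_self_sqrt (neg_nonneg.mpr hi), neg_smul]
  abel

end IsHermitian

end Matrix

theorem Fin.sum_univ_three_of_ne {M : Type*} [AddCommMonoid M] (f : Fin 3 → M) {i j k : Fin 3}
    (hij : i ≠ j) (hik : i ≠ k) (hjk : j ≠ k) : ∑ m, f m = f i + f j + f k := by
  have huniv : (Finset.univ : Finset (Fin 3)) = {i, j, k} := by
    revert i j k
    decide
  rw [huniv, Finset.sum_insert (by simp [hij, hik]), Finset.sum_pair hjk, add_assoc]

theorem exists_nonpos_zero_nonneg_of_prod_eq_zero {μ : Fin 3 → ℝ} (hprod : ∏ i, μ i = 0)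
    (hsum : (∑ i, μ i) ^ 2 ≤ ∑ i, μ i ^ 2) :
    ∃ i j k : Fin 3, i ≠ j ∧ i ≠ k ∧ j ≠ k ∧ μ i ≤ 0 ∧ μ j = 0 ∧ 0 ≤ μ k := by
  obtain ⟨j, -, hj⟩ := Finset.prod_eq_zero_iff.mp hprod
  have hthird : ∀ j : Fin 3, ∃ i k : Fin 3, i ≠ j ∧ i ≠ k ∧ j ≠ k := by decide
  obtain ⟨i, k, hij, hik, hjk⟩ := hthird j
  rw [Fin.sum_univ_three_of_ne _ hij.symm hjk hik, Fin.sum_univ_three_of_ne _ hij.symm hjk hik,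
    hj] at hsum
  have hmul : μ i * μ k ≤ 0 := by nlinarith
  rcases mul_nonpos_iff.mp hmul with ⟨hi, hk⟩ | ⟨hi, hk⟩
  · exact ⟨k, j, i, hjk.symm, hik.symm, hij.symm, hk, hj, hi⟩
  · exact ⟨i, j, k, hij, hik, hjk, hi, hj, hk⟩

theorem neg_zero_pos_or_two_zeros_iff (μ : Fin 3 → ℝ) :
    ((∃ i j k : Fin 3, i ≠ j ∧ i ≠ k ∧ j ≠ k ∧ μ i < 0 ∧ μ j = 0 ∧ 0 < μ k) ∨
        (∃ i j : Fin 3, i ≠ j ∧ μ i = 0 ∧ μ j = 0)) ↔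
      ∃ i j k : Fin 3, i ≠ j ∧ i ≠ k ∧ j ≠ k ∧ μ i ≤ 0 ∧ μ j = 0 ∧ 0 ≤ μ k := by
  constructor
  · rintro (⟨i, j, k, hij, hik, hjk, hi, hj, hk⟩ | ⟨i, j, hij, hi, hj⟩)
    · exact ⟨i, j, k, hij, hik, hjk, hi.le, hj, hk.le⟩
    · have hthird : ∀ i j : Fin 3, i ≠ j → ∃ k, i ≠ k ∧ j ≠ k := by decide
      obtain ⟨k, hik, hjk⟩ := hthird i j hij
      rcases le_total 0 (μ k) with hk | hk
      · exact ⟨i, j, k, hij, hik, hjk, hi.le, hj, hk⟩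
      · exact ⟨k, i, j, hik.symm, hjk.symm, hij, hk, hi, hj.ge⟩
  · rintro ⟨i, j, k, hij, hik, hjk, hi, hj, hk⟩
    rcases hi.lt_or_eq with hi | hi
    · rcases hk.lt_or_eq with hk | hk
      · exact Or.inl ⟨i, j, k, hij, hik, hjk, hi, hj, hk⟩
      · exact Or.inr ⟨k, j, hjk.symm, hk.symm, hj⟩
    · exact Or.inr ⟨i, j, hij, hi, hj⟩

/-- A symmetric 3×3 real matrix `B` is a symmetrized rank-one matrix iff
either it has two eigenvalues of opposite signs and one zero eigenvalue,
or it has at least two zero eigenvalues. -/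
theorem symmetrized_rank_one_iff_eigenvalues
    (B : Matrix (Fin 3) (Fin 3) ℝ) (hB : B.IsHermitian) :
    (∃ a b : Fin 3 → ℝ,
        B = (1/2 : ℝ) • (vecMulVec b a + vecMulVec a b)) ↔
      ((∃ i j k : Fin 3, i ≠ j ∧ i ≠ k ∧ j ≠ k ∧
          hB.eigenvalues i < 0 ∧ hB.eigenvalues j = 0 ∧ 0 < hB.eigenvalues k) ∨
       (∃ i j : Fin 3, i ≠ j ∧ hB.eigenvalues i = 0 ∧ hB.eigenvalues j = 0)) := by
  rw [neg_zero_pos_or_two_zeros_iff]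
  constructor
  · rintro ⟨a, b, hab⟩
    change B = symmetrizedVecMulVec a b at hab
    have hdet : B.det = 0 := hab ▸ det_symmetrizedVecMulVec_fin_three a b
    have hprod : ∏ i, hB.eigenvalues i = 0 := by simpa [hdet] using hB.det_eq_prod_eigenvalues.symm
    exact exists_nonpos_zero_nonneg_of_prod_eq_zero hprod
      (hB.sq_sum_eigenvalues_le_of_eq_symmetrizedVecMulVec hab)
  · rintro ⟨i, j, k, hij, hik, hjk, hi, hj, hk⟩
    refine hB.exists_eq_symmetrizedVecMulVec_of_eigenvalues hik hi hk fun m hmi hmk => ?_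
    rwa [show m = j by omega]
end

section
/- Let A be a symmetric 3×3 real matrix whose ordered eigenvalues satisfy λ₁ < λ₂ = 0 < λ₃ (one zero eigenvalue and two nonzero eigenvalues of opposite signs). Then there exist vectors c, z ∈ ℝ³, both nonzero, such that A = (c zᵀ + z cᵀ)/2 with c and z linearly independent. -/
/-!
By the spectral theorem, `A = λ₁ • u uᵀ + λ₃ • w wᵀ` for orthonormal eigenvectors `u`, `w`,
the zero eigenvalue contributing nothing. With `a = √(-λ₁)` and `b = √λ₃`, the vectors
`c = b w + a u` and `z = b w - a u` satisfy `c zᵀ + z cᵀ = 2 (b² w wᵀ - a² u uᵀ) = 2 A`, and they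
are linearly independent because `u`, `w` are and the change of coordinates has determinant
`-2ab ≠ 0`.
-/

open Matrix

namespace Matrix.IsHermitian

variable {𝕜 n : Type*} [RCLike 𝕜] [Fintype n] [DecidableEq n] {A : Matrix n n 𝕜}

theorem eq_sum_eigenvalues_smul_vecMulVec (hA : A.IsHermitian) :
    A = ∑ m, hA.eigenvalues m •
      vecMulVec ⇑(hA.eigenvectorBasis m) (star ⇑(hA.eigenvectorBasis m)) := by
  conv_lhs => rw [hA.spectral_theorem]
  ext x y
  rw [Unitary.conjStarAlgAut_apply, mul_apply]
  simp only [mul_diagonal, star_apply, eigenvectorUnitary_apply, Function.comp_apply,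
    Matrix.sum_apply, smul_apply, vecMulVec_apply, Pi.star_apply, RCLike.real_smul_eq_coe_mul]
  exact Finset.sum_congr rfl fun m _ => by ring

theorem linearIndependent_eigenvectorBasis_pair (hA : A.IsHermitian) {i j : n} (hij : i ≠ j) :
    LinearIndependent 𝕜 ![⇑(hA.eigenvectorBasis i), ⇑(hA.eigenvectorBasis j)] := by
  have hinj : Function.Injective ![i, j] := by
    intro a b; fin_cases a <;> fin_cases b <;> simp [hij, hij.symm]
  have h := (hA.eigenvectorBasis.orthonormal.linearIndependent.comp _ hinj).map'
    (WithLp.linearEquiv 2 𝕜 (n → 𝕜)).toLinearMap (LinearEquiv.ker _)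
  have heq : ⇑(WithLp.linearEquiv 2 𝕜 (n → 𝕜)).toLinearMap ∘ ⇑hA.eigenvectorBasis ∘ ![i, j] =
      ![⇑(hA.eigenvectorBasis i), ⇑(hA.eigenvectorBasis j)] := by
    ext m : 1; fin_cases m <;> rfl
  rwa [heq] at h

end Matrix.IsHermitian

theorem Finset.sum_univ_eq_add_add_of_card_eq_three {ι M : Type*} [Fintype ι] [DecidableEq ι]
    [AddCommMonoid M] (hcard : Fintype.card ι = 3) {i j k : ι} (hij : i ≠ j) (hik : i ≠ k)
    (hjk : j ≠ k) (f : ι → M) : ∑ m, f m = f i + f j + f k := by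
  have huniv : ({i, j, k} : Finset ι) = Finset.univ :=
    Finset.eq_univ_of_card _ (by rw [Finset.card_eq_three.mpr ⟨i, j, k, hij, hik, hjk, rfl⟩, hcard])
  rw [← huniv, Finset.sum_insert (by simp [hij, hik]), Finset.sum_pair hjk, add_assoc]

theorem Matrix.smul_vecMulVec_self_add_smul_vecMulVec_self {n : Type*} {α β : ℝ} (hα : α ≤ 0)
    (hβ : 0 ≤ β) (u w : n → ℝ) :
    α • vecMulVec u u + β • vecMulVec w w =
      (1/2 : ℝ) • (vecMulVec (√β • w + √(-α) • u) (√β • w - √(-α) • u) +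
        vecMulVec (√β • w - √(-α) • u) (√β • w + √(-α) • u)) := by
  ext x y
  simp only [add_apply, smul_apply, vecMulVec_apply, Pi.add_apply, Pi.sub_apply, Pi.smul_apply,
    smul_eq_mul]
  linear_combination (u x * u y) * Real.mul_self_sqrt (neg_nonneg.mpr hα) -
    (w x * w y) * Real.mul_self_sqrt hβ

/-- A symmetric 3×3 matrix with one negative, one zero, and one positive
eigenvalue is a symmetrized rank-one matrix with linearly independent
nonzero factors. -/
theorem symmetrized_rank_one_of_indefinite
    (A : Matrix (Fin 3) (Fin 3) ℝ) (hA : A.IsHermitian)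
    (heig : ∃ i j k : Fin 3, i ≠ j ∧ i ≠ k ∧ j ≠ k ∧
      hA.eigenvalues i < 0 ∧ hA.eigenvalues j = 0 ∧ 0 < hA.eigenvalues k) :
    ∃ c z : Fin 3 → ℝ, c ≠ 0 ∧ z ≠ 0 ∧
      A = (1/2 : ℝ) • (vecMulVec c z + vecMulVec z c) ∧
      LinearIndependent ℝ ![c, z] := by
  obtain ⟨i, j, k, hij, hik, hjk, hneg, hzero, hpos⟩ := heig
  set u := ⇑(hA.eigenvectorBasis i)
  set w := ⇑(hA.eigenvectorBasis k)
  have hA_spectral : A = hA.eigenvalues i • vecMulVec u u + hA.eigenvalues k • vecMulVec w w := by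
    conv_lhs => rw [hA.eq_sum_eigenvalues_smul_vecMulVec,
      Finset.sum_univ_eq_add_add_of_card_eq_three (Fintype.card_fin 3) hij hik hjk, hzero,
      zero_smul, add_zero]
    simp only [star_trivial, u, w]
  have hindep : LinearIndependent ℝ
      ![√(hA.eigenvalues k) • w + √(-hA.eigenvalues i) • u,
        √(hA.eigenvalues k) • w - √(-hA.eigenvalues i) • u] := by
    rw [sub_eq_add_neg, ← neg_smul, LinearIndependent.pair_add_smul_add_smul_iff]
    refine ⟨hA.linearIndependent_eigenvectorBasis_pair hik.symm, ?_⟩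
    have hb : 0 < √(hA.eigenvalues k) := Real.sqrt_pos.mpr hpos
    have ha : 0 < √(-hA.eigenvalues i) := Real.sqrt_pos.mpr (neg_pos.mpr hneg)
    nlinarith [mul_pos hb ha]
  refine ⟨_, _, hindep.ne_zero 0, hindep.ne_zero 1, ?_, hindep⟩
  exact hA_spectral.trans <| smul_vecMulVec_self_add_smul_vecMulVec_self hneg.le hpos.le u w
end
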